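/- Let Ū ⊆ K̄ⁿ be a K̄-subspace of dimension d, let π : Kⁿ → K^d be an exhibition of Ū, and let U, U' ⊆ Kⁿ be two lifts of Ū. Then there is a unique K-linear map M₀ : U → U' satisfying π(M₀(u)) = π(u) for all u ∈ U; this M₀ is bijective and is a risometry, i.e. rv(M₀(u) − M₀(u')) = rv(u − u') for all u, u' ∈ U. Moreover, M₀ extends to a matrix M ∈ GLₙ(𝒪) with res(M) = Iₙ sending U onto U'. -/

import Mathlib

/-! For a lift `U` of `Ū`, the projection `π` preserves the max-valuation on `U`: a vector of `U`
of valuation `1` has a nonzero residue in `Ū`, which `π̄` does not kill. Hence `π` is injective on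
`U`; lifting the vectors of `Ū` that `π̄` sends to the standard basis gives a `σ`-coordinate matrix
that is residually the identity, hence invertible, so `π` also maps `U` onto `K^d`. This forces
`M₀ = (π|_{U'})⁻¹ ∘ π|_U`. The same residue argument, applied to `u ∈ U` and `M₀ u ∈ U'` (which
have equal projections), gives `v(M₀ u - u) < v(u)`: `M₀` is a risometry, and
`M = 1 + ((π|_{U'})⁻¹ - (π|_U)⁻¹) ∘ π` is residually the identity, hence lies in `GLₙ(𝒪)`. -/

noncomputable section

open scoped Classical Pointwise

section Preamble

variable {K : Type*} [Field K] {Γ : Type*} [LinearOrderedCommGroupWithZero Γ]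

instance (priority := 100) : OrderBot Γ where
  bot := 0
  bot_le _ := zero_le'

/-- The max-valuation on `K^n`: `v(a) = maxᵢ v(aᵢ)`. -/
def vv (v : Valuation K Γ) {n : ℕ} (x : Fin n → K) : Γ :=
  Finset.univ.sup fun i => v (x i)

/-- `rvEq v x y` expresses `rv(x) = rv(y)` in `RV⁽ⁿ⁾ = Kⁿ/∼`, where
`x ∼ y` iff `v(x−y) < v(x)` or `x = y = 0`. -/
def rvEq (v : Valuation K Γ) {n : ℕ} (x y : Fin n → K) : Prop :=
  vv v (x - y) < vv v x ∨ (x = 0 ∧ y = 0)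

/-- Balls in `K` (with `K` itself counting as a ball). -/
def IsBall1 (v : Valuation K Γ) (B : Set K) : Prop :=
  B = Set.univ ∨ ∃ a : K, ∃ γ : Γ, γ ≠ 0 ∧
    (B = {x | v (x - a) < γ} ∨ B = {x | v (x - a) ≤ γ})

/-- Balls in `Kⁿ` (with `Kⁿ` itself counting as a ball). -/
def IsBall (v : Valuation K Γ) {n : ℕ} (B : Set (Fin n → K)) : Prop :=
  B = Set.univ ∨ ∃ a : Fin n → K, ∃ γ : Γ, γ ≠ 0 ∧
    (B = {x | vv v (x - a) < γ} ∨ B = {x | vv v (x - a) ≤ γ})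

/-- Spherical completeness: every nonempty chain of balls in `K` has nonempty
intersection. -/
def SphericallyComplete (v : Valuation K Γ) : Prop :=
  ∀ C : Set (Set K), C.Nonempty → (∀ B ∈ C, IsBall1 v B) → IsChain (· ⊆ ·) C →
    (⋂ B ∈ C, B).Nonempty

/-- The residue field `K̄` of the valuation ring `𝒪 = {x | v x ≤ 1}`. -/
def Kbar (v : Valuation K Γ) : Type _ :=
  IsLocalRing.ResidueField v.valuationSubring

instance (v : Valuation K Γ) : Field (Kbar v) :=
  inferInstanceAs (Field (IsLocalRing.ResidueField v.valuationSubring))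

/-- The residue map `res : 𝒪 → K̄`, extended by the junk value `0` outside `𝒪`. -/
def res' (v : Valuation K Γ) (x : K) : Kbar v :=
  if h : v x ≤ 1 then IsLocalRing.residue v.valuationSubring ⟨x, h⟩ else 0

/-- The coordinatewise residue map on `Kⁿ`. -/
def resv (v : Valuation K Γ) {n : ℕ} (x : Fin n → K) : Fin n → Kbar v :=
  fun i => res' v (x i)

/-- `res(S)` for a set `S ⊆ Kⁿ`: the set of residues of points of `S ∩ 𝒪ⁿ`. -/
def resSet (v : Valuation K Γ) {n : ℕ} (S : Set (Fin n → K)) : Set (Fin n → Kbar v) :=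
  resv v '' {x ∈ S | ∀ i, v (x i) ≤ 1}

/-- `dir(x) = res(K·x) ⊆ K̄ⁿ`. -/
def dirSet (v : Valuation K Γ) {n : ℕ} (x : Fin n → K) : Set (Fin n → Kbar v) :=
  resSet v {y | ∃ c : K, y = c • x}

/-- The coordinate projection `Kⁿ → K^d` selecting the coordinates `σ 0 < σ 1 < ⋯`. -/
def proj {A : Type*} {n d : ℕ} (σ : Fin d → Fin n) (x : Fin n → A) : Fin d → A :=
  fun k => x (σ k)

/-- `σ` (a strictly increasing selection of `d` of the `n` coordinates) is an
exhibition of the `K̄`-subspace `Ū ⊆ K̄ⁿ` if the corresponding coordinate projection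
`K̄ⁿ → K̄^d` restricts to an isomorphism from `Ū` onto `K̄^d`. -/
def IsExhibition (v : Valuation K Γ) {n d : ℕ} (σ : Fin d → Fin n)
    (Ubar : Submodule (Kbar v) (Fin n → Kbar v)) : Prop :=
  StrictMono σ ∧ Set.BijOn (proj σ) (Ubar : Set (Fin n → Kbar v)) Set.univ

/-- `affdir(C)`: the `K̄`-subspace of `K̄ⁿ` generated by all `dir(x − x')`, `x, x' ∈ C`. -/
def affdir (v : Valuation K Γ) {n : ℕ} (C : Set (Fin n → K)) :
    Submodule (Kbar v) (Fin n → Kbar v) :=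
  Submodule.span (Kbar v) (⋃ x ∈ C, ⋃ x' ∈ C, dirSet v (x - x'))

/-- A matrix has entries in the valuation ring `𝒪`. -/
def EntriesInO (v : Valuation K Γ) {n : ℕ} (M : Matrix (Fin n) (Fin n) K) : Prop :=
  ∀ i j, v (M i j) ≤ 1

/-- `M ∈ GLₙ(𝒪)`: `M` is invertible, with entries in `𝒪`, and its inverse also has
entries in `𝒪`. -/
def MemGLO (v : Valuation K Γ) {n : ℕ} (M : Matrix (Fin n) (Fin n) K) : Prop :=
  EntriesInO v M ∧ ∃ N : Matrix (Fin n) (Fin n) K,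
    M * N = 1 ∧ N * M = 1 ∧ EntriesInO v N

/-- The entrywise residue matrix of `M`. -/
def resM (v : Valuation K Γ) {n : ℕ} (M : Matrix (Fin n) (Fin n) K) :
    Matrix (Fin n) (Fin n) (Kbar v) :=
  fun i j => res' v (M i j)

/-- `DeltaLE v U W γ` expresses `Δ(U, W) ≤ γ`: for every `u ∈ U` there is `w ∈ W`
with `v(u − w) ≤ v(u)·γ`. -/
def DeltaLE (v : Valuation K Γ) {n : ℕ} (U W : Submodule K (Fin n → K)) (γ : Γ) : Prop :=
  ∀ u ∈ U, ∃ w ∈ W, vv v (u - w) ≤ vv v u * γ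

/-- `IsDelta v U W γ` expresses `Δ(U, W) = γ`: `γ` is the minimum of all admissible
bounds. -/
def IsDelta (v : Valuation K Γ) {n : ℕ} (U W : Submodule K (Fin n → K)) (γ : Γ) : Prop :=
  DeltaLE v U W γ ∧ ∀ δ : Γ, DeltaLE v U W δ → γ ≤ δ

end Preamble

variable {K : Type*} [Field K] {Γ : Type*} [LinearOrderedCommGroupWithZero Γ]

open scoped Matrix

section MaxValuation

variable (v : Valuation K Γ) {n : ℕ}

lemma vv_le_iff (x : Fin n → K) (γ : Γ) : vv v x ≤ γ ↔ ∀ i, v (x i) ≤ γ := by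
  simp [vv]

lemma le_vv (x : Fin n → K) (i : Fin n) : v (x i) ≤ vv v x :=
  Finset.le_sup (f := fun i => v (x i)) (Finset.mem_univ i)

lemma vv_lt_one_iff (x : Fin n → K) : vv v x < 1 ↔ ∀ i, v (x i) < 1 := by
  simp [vv, Finset.sup_lt_iff (bot_le.trans_lt zero_lt_one : (⊥ : Γ) < 1)]

lemma vv_eq_zero_iff (x : Fin n → K) : vv v x = 0 ↔ x = 0 := by
  refine ⟨fun h => funext fun i => v.zero_iff.mp (le_antisymm (h ▸ le_vv v x i) zero_le),
    fun h => le_antisymm ((vv_le_iff v x 0).mpr fun i => by simp [h]) zero_le⟩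

lemma vv_pos_iff (x : Fin n → K) : 0 < vv v x ↔ x ≠ 0 := by
  rw [zero_lt_iff, Ne, vv_eq_zero_iff]

lemma exists_coord_eq_vv {x : Fin n → K} (hx : x ≠ 0) : ∃ j, v (x j) = vv v x := by
  obtain ⟨i, -⟩ := Function.ne_iff.mp hx
  obtain ⟨j, -, hj⟩ := Finset.exists_mem_eq_sup Finset.univ ⟨i, Finset.mem_univ i⟩
    fun i => v (x i)
  exact ⟨j, hj.symm⟩

lemma vv_smul (c : K) (x : Fin n → K) : vv v (c • x) = v c * vv v x := by
  rcases eq_or_ne x 0 with rfl | hx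
  · simp [(vv_eq_zero_iff v _).mpr rfl]
  refine le_antisymm ((vv_le_iff v _ _).mpr fun i => ?_) ?_
  · simpa using mul_le_mul_right (le_vv v x i) (v c)
  · obtain ⟨j, hj⟩ := exists_coord_eq_vv v hx
    simpa [← hj] using le_vv v (c • x) j

lemma vv_proj_le {d : ℕ} (σ : Fin d → Fin n) (x : Fin n → K) : vv v (proj σ x) ≤ vv v x :=
  (vv_le_iff v _ _).mpr fun k => le_vv v x (σ k)

end MaxValuation

section Residue

variable (v : Valuation K Γ)

lemma res'_def {x : K} (hx : v x ≤ 1) :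
    res' v x = IsLocalRing.residue v.valuationSubring ⟨x, (v.mem_valuationSubring_iff x).mpr hx⟩ :=
  dif_pos hx

lemma res'_eq_res'_iff {x y : K} (hx : v x ≤ 1) (hy : v y ≤ 1) :
    res' v x = res' v y ↔ v (x - y) < 1 := by
  rw [res'_def v hx, res'_def v hy]
  exact Ideal.Quotient.eq.trans (Valuation.mem_maximalIdeal_iff K v)

lemma resv_eq_resv_iff {n : ℕ} {x y : Fin n → K} (hx : ∀ i, v (x i) ≤ 1)
    (hy : ∀ i, v (y i) ≤ 1) : resv v x = resv v y ↔ vv v (x - y) < 1 := by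
  rw [vv_lt_one_iff, funext_iff]
  exact forall_congr' fun i => res'_eq_res'_iff v (hx i) (hy i)

/-- `det M` is a unit of `𝒪` because its residue is `det (res M) = 1`. -/
lemma memGLO_of_resM_eq_one {n : ℕ} {M : Matrix (Fin n) (Fin n) K} (hM : EntriesInO v M)
    (hres : resM v M = 1) : MemGLO v M := by
  let A : Matrix (Fin n) (Fin n) v.valuationSubring := fun i j => ⟨M i j, hM i j⟩
  have hA : A.map (IsLocalRing.residue _) = 1 := by
    ext i j
    have hij := congrFun (congrFun hres i) j
    rw [resM, res'_def v (hM i j), Matrix.one_apply] at hij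
    rw [Matrix.map_apply, Matrix.one_apply]
    exact hij
  have hdet : IsUnit A.det := by
    rw [← IsLocalRing.residue_ne_zero_iff_isUnit, RingHom.map_det, RingHom.mapMatrix_apply, hA,
      Matrix.det_one]
    exact one_ne_zero
  let coe := v.valuationSubring.subtype
  refine ⟨hM, (A⁻¹).map coe, ?_, ?_, fun i j => (A⁻¹ i j).2⟩
  · rw [show M = A.map coe from rfl, ← Matrix.map_mul, Matrix.mul_nonsing_inv A hdet]
    simp
  · rw [show M = A.map coe from rfl, ← Matrix.map_mul, Matrix.nonsing_inv_mul A hdet]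
    simp

end Residue

section ResiduallyIdentity

variable (v : Valuation K Γ) {n : ℕ} {M : Matrix (Fin n) (Fin n) K}

lemma sub_one_apply_lt_one (h : ∀ x ≠ 0, vv v (M *ᵥ x - x) < vv v x) (i j : Fin n) :
    v ((M - 1) i j) < 1 := by
  calc v ((M - 1) i j) = v ((M *ᵥ Pi.single j 1 - Pi.single j (1 : K) : Fin n → K) i) := by
        rw [Matrix.mulVec_single_one, Matrix.sub_apply, Matrix.one_apply, Pi.sub_apply,
          Matrix.col_apply, Pi.single_apply]
    _ ≤ vv v (M *ᵥ Pi.single j 1 - Pi.single j 1) := le_vv v _ i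
    _ < vv v (Pi.single j 1) := h _ (Pi.single_ne_zero_iff.mpr one_ne_zero)
    _ ≤ 1 := (vv_le_iff v _ 1).mpr fun i => by rw [Pi.single_apply]; split_ifs <;> simp

lemma entriesInO_of_sub_one_lt (h : ∀ i j, v ((M - 1) i j) < 1) : EntriesInO v M := by
  intro i j
  rw [← sub_add_cancel M 1, Matrix.add_apply]
  exact v.map_add_le (h i j).le (by rw [Matrix.one_apply]; split_ifs <;> simp)

lemma resM_eq_one_of_sub_one_lt (h : ∀ i j, v ((M - 1) i j) < 1) : resM v M = 1 := by
  ext i j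
  have hone : v ((1 : Matrix (Fin n) (Fin n) K) i j) ≤ 1 := by
    rw [Matrix.one_apply]; split_ifs <;> simp
  rw [resM, (res'_eq_res'_iff v (entriesInO_of_sub_one_lt v h i j) hone).mpr (h i j),
    Matrix.one_apply, Matrix.one_apply]
  split_ifs
  · exact (res'_def v (by simp)).trans (map_one _)
  · exact (res'_def v (by simp)).trans (map_zero _)

end ResiduallyIdentity

lemma map_mulVecLin_eq_of_mulVec_eq {R ι κ : Type*} [CommSemiring R] [Fintype κ]
    {U : Submodule R (κ → R)} {U' : Submodule R (ι → R)} {M : Matrix ι κ R} (e : U ≃ₗ[R] U')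
    (h : ∀ u : U, M *ᵥ (u : κ → R) = e u) : U.map M.mulVecLin = U' := by
  ext y
  constructor
  · rintro ⟨x, hx, rfl⟩
    rw [Matrix.mulVecLin_apply, h ⟨x, hx⟩]
    exact (e _).2
  · intro hy
    exact ⟨_, (e.symm ⟨y, hy⟩).2, by rw [Matrix.mulVecLin_apply, h, e.apply_symm_apply]⟩

def IsLift (v : Valuation K Γ) {n : ℕ} (Ubar : Submodule (Kbar v) (Fin n → Kbar v))
    (U : Submodule K (Fin n → K)) : Prop :=
  resSet v (U : Set (Fin n → K)) = (Ubar : Set (Fin n → Kbar v))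

section Lift

variable {v : Valuation K Γ} {n d : ℕ} {σ : Fin d → Fin n}
  {Ubar : Submodule (Kbar v) (Fin n → Kbar v)} {U U' : Submodule K (Fin n → K)}

lemma IsLift.resv_mem (hU : IsLift v Ubar U) {x : Fin n → K} (hx : x ∈ U) (hxO : vv v x ≤ 1) :
    resv v x ∈ Ubar := by
  rw [← SetLike.mem_coe, ← hU]
  exact ⟨x, ⟨hx, (vv_le_iff v x 1).mp hxO⟩, rfl⟩

lemma vv_sub_lt_one_of_vv_proj_sub_lt_one (hσ : IsExhibition v σ Ubar) (hU : IsLift v Ubar U)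
    (hU' : IsLift v Ubar U') {x y : Fin n → K} (hx : x ∈ U) (hy : y ∈ U')
    (hxO : vv v x ≤ 1) (hyO : vv v y ≤ 1) (h : vv v (proj σ (x - y)) < 1) :
    vv v (x - y) < 1 := by
  have hxO' := (vv_le_iff v x 1).mp hxO
  have hyO' := (vv_le_iff v y 1).mp hyO
  rw [← resv_eq_resv_iff v hxO' hyO']
  refine hσ.2.injOn (hU.resv_mem hx hxO) (hU'.resv_mem hy hyO) ?_
  exact (resv_eq_resv_iff v (fun k => hxO' (σ k)) (fun k => hyO' (σ k))).mpr h

/-- Scaling `x` to norm `1` reduces this to the previous lemma. -/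
lemma vv_sub_lt_of_vv_proj_sub_lt (hσ : IsExhibition v σ Ubar) (hU : IsLift v Ubar U)
    (hU' : IsLift v Ubar U') {x y : Fin n → K} (hx : x ∈ U) (hy : y ∈ U')
    (hyx : vv v y ≤ vv v x) (h : vv v (proj σ (x - y)) < vv v x) :
    vv v (x - y) < vv v x := by
  have hx0 : x ≠ 0 := (vv_pos_iff v x).mp (zero_le.trans_lt h)
  obtain ⟨j, hj⟩ := exists_coord_eq_vv v hx0
  have hc : v (x j)⁻¹ * vv v x = 1 := by
    rw [map_inv₀, hj, inv_mul_cancel₀ ((vv_pos_iff v x).mpr hx0).ne']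
  have hc0 : 0 < v (x j)⁻¹ := zero_lt_iff.mpr (left_ne_zero_of_mul_eq_one hc)
  have key := vv_sub_lt_one_of_vv_proj_sub_lt_one hσ hU hU' (U.smul_mem (x j)⁻¹ hx)
    (U'.smul_mem (x j)⁻¹ hy) (by rw [vv_smul, hc]) (by rw [vv_smul, ← hc]; gcongr)
    (by rw [← smul_sub, ← hc]; exact (vv_smul v _ (proj σ (x - y))).trans_lt (by gcongr))
  rw [← smul_sub, vv_smul, ← hc] at key
  exact lt_of_mul_lt_mul_left' key

lemma vv_proj_eq (hσ : IsExhibition v σ Ubar) (hU : IsLift v Ubar U) {x : Fin n → K}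
    (hx : x ∈ U) : vv v (proj σ x) = vv v x := by
  refine (vv_proj_le v σ x).antisymm (not_lt.mp fun h => ?_)
  have := vv_sub_lt_of_vv_proj_sub_lt hσ hU hU hx U.zero_mem
    (by rw [(vv_eq_zero_iff v 0).mpr rfl]; exact zero_le) (by rwa [sub_zero])
  rw [sub_zero] at this
  exact this.false

lemma eq_zero_of_proj_eq_zero (hσ : IsExhibition v σ Ubar) (hU : IsLift v Ubar U)
    {x : Fin n → K} (hx : x ∈ U) (h : proj σ x = 0) : x = 0 := by
  rw [← vv_eq_zero_iff v, ← vv_proj_eq hσ hU hx, h, vv_eq_zero_iff]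

lemma vv_sub_lt_of_proj_eq (hσ : IsExhibition v σ Ubar) (hU : IsLift v Ubar U)
    (hU' : IsLift v Ubar U') {x y : Fin n → K} (hx : x ∈ U) (hy : y ∈ U')
    (h : proj σ x = proj σ y) (hx0 : x ≠ 0) : vv v (x - y) < vv v x := by
  refine vv_sub_lt_of_vv_proj_sub_lt hσ hU hU' hx hy ?_ ?_
  · rw [← vv_proj_eq hσ hU' hy, ← h, vv_proj_eq hσ hU hx]
  · have h0 : proj σ (x - y) = 0 := sub_eq_zero.mpr h
    rw [h0, (vv_eq_zero_iff v 0).mpr rfl, vv_pos_iff]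
    exact hx0

lemma rvEq_of_proj_eq (hσ : IsExhibition v σ Ubar) (hU : IsLift v Ubar U)
    (hU' : IsLift v Ubar U') {x y : Fin n → K} (hx : x ∈ U) (hy : y ∈ U')
    (h : proj σ x = proj σ y) : rvEq v x y := by
  rcases eq_or_ne x 0 with rfl | hx0
  · exact Or.inr ⟨rfl, (eq_zero_of_proj_eq_zero hσ hU' hy h.symm)⟩
  · exact Or.inl (vv_sub_lt_of_proj_eq hσ hU hU' hx hy h hx0)

lemma exists_mem_proj_eq (hσ : IsExhibition v σ Ubar) (hU : IsLift v Ubar U)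
    (t : Fin d → K) : ∃ x ∈ U, proj σ x = t := by
  have hlift : ∀ k : Fin d, ∃ u ∈ U, (∀ i, v (u i) ≤ 1) ∧ proj σ (resv v u) = Pi.single k 1 := by
    intro k
    obtain ⟨ubar, hubar, hproj⟩ := hσ.2.surjOn (Set.mem_univ (Pi.single k (1 : Kbar v)))
    rw [← hU] at hubar
    obtain ⟨u, ⟨huU, huO⟩, rfl⟩ := hubar
    exact ⟨u, huU, huO, hproj⟩
  choose u huU huO hres using hlift
  let W : Matrix (Fin d) (Fin d) K := Matrix.of fun l k => u k (σ l)
  have hWres : resM v W = 1 := by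
    ext l k
    rw [Matrix.one_apply, ← Pi.single_apply, ← hres k]
    rfl
  obtain ⟨-, N, hWN, -⟩ := memGLO_of_resM_eq_one v (M := W) (fun l k => huO k (σ l)) hWres
  refine ⟨∑ k, (N *ᵥ t) k • u k, Submodule.sum_mem _ fun k _ => U.smul_mem _ (huU k), ?_⟩
  calc proj σ (∑ k, (N *ᵥ t) k • u k) = W *ᵥ (N *ᵥ t) := by
        ext l
        simp [proj, W, Matrix.mulVec, dotProduct, mul_comm]
    _ = t := by rw [Matrix.mulVec_mulVec, hWN, Matrix.one_mulVec]

variable (σ) in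
def liftProjEquiv (hσ : IsExhibition v σ Ubar) (hU : IsLift v Ubar U) : U ≃ₗ[K] (Fin d → K) :=
  LinearEquiv.ofBijective ((LinearMap.funLeft K K σ).domRestrict U)
    ⟨(injective_iff_map_eq_zero _).mpr fun u hu =>
        Subtype.ext (eq_zero_of_proj_eq_zero hσ hU u.2 hu),
      fun t => (exists_mem_proj_eq hσ hU t).elim fun x hx => ⟨⟨x, hx.1⟩, hx.2⟩⟩

lemma liftProjEquiv_apply (hσ : IsExhibition v σ Ubar) (hU : IsLift v Ubar U) (u : U) :
    liftProjEquiv σ hσ hU u = proj σ (u : Fin n → K) :=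
  rfl

variable (σ) in
/-- The map `M₀` of the theorem. -/
def liftTransport (hσ : IsExhibition v σ Ubar) (hU : IsLift v Ubar U) (hU' : IsLift v Ubar U') :
    U ≃ₗ[K] U' :=
  (liftProjEquiv σ hσ hU).trans (liftProjEquiv σ hσ hU').symm

lemma forall_proj_eq_iff_eq_liftTransport (hσ : IsExhibition v σ Ubar) (hU : IsLift v Ubar U)
    (hU' : IsLift v Ubar U') (M₀ : U →ₗ[K] U') :
    (∀ u : U, proj σ (M₀ u : Fin n → K) = proj σ (u : Fin n → K)) ↔
      M₀ = (liftTransport σ hσ hU hU').toLinearMap := by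
  simp only [← liftProjEquiv_apply hσ hU, ← liftProjEquiv_apply hσ hU', LinearMap.ext_iff,
    liftTransport, LinearEquiv.coe_coe, LinearEquiv.trans_apply, LinearEquiv.eq_symm_apply]

lemma vv_liftProjEquiv_symm_sub_lt (hσ : IsExhibition v σ Ubar) (hU : IsLift v Ubar U)
    (hU' : IsLift v Ubar U') {t : Fin d → K} (ht : t ≠ 0) :
    vv v (((liftProjEquiv σ hσ hU').symm t : Fin n → K) -
      ((liftProjEquiv σ hσ hU).symm t : Fin n → K)) < vv v t := by
  set y' := (liftProjEquiv σ hσ hU').symm t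
  set y := (liftProjEquiv σ hσ hU).symm t
  have hy' : proj σ (y' : Fin n → K) = t := (liftProjEquiv σ hσ hU').apply_symm_apply t
  have hy : proj σ (y : Fin n → K) = t := (liftProjEquiv σ hσ hU).apply_symm_apply t
  have hy'0 : (y' : Fin n → K) ≠ 0 := by
    rintro h0
    exact ht (by rw [← hy', h0]; rfl)
  calc vv v ((y' : Fin n → K) - (y : Fin n → K)) < vv v (y' : Fin n → K) :=
        vv_sub_lt_of_proj_eq hσ hU' hU y'.2 y.2 (hy'.trans hy.symm) hy'0
    _ = vv v t := by rw [← vv_proj_eq hσ hU' y'.2, hy']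

lemma exists_matrix_mulVec_eq_liftTransport (hσ : IsExhibition v σ Ubar) (hU : IsLift v Ubar U)
    (hU' : IsLift v Ubar U') :
    ∃ M : Matrix (Fin n) (Fin n) K, MemGLO v M ∧ resM v M = 1 ∧
      ∀ u : U, M *ᵥ (u : Fin n → K) = liftTransport σ hσ hU hU' u := by
  set e := liftProjEquiv σ hσ hU
  set e' := liftProjEquiv σ hσ hU'
  let T : (Fin d → K) →ₗ[K] (Fin n → K) :=
    U'.subtype ∘ₗ e'.symm.toLinearMap - U.subtype ∘ₗ e.symm.toLinearMap
  let M := LinearMap.toMatrix' (LinearMap.id + T ∘ₗ LinearMap.funLeft K K σ)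
  have hM : ∀ x, M *ᵥ x = x + T (proj σ x) := fun x => LinearMap.toMatrix'_mulVec _ x
  have hlt : ∀ i j, v ((M - 1) i j) < 1 := by
    refine sub_one_apply_lt_one v fun x hx => ?_
    rw [hM, add_sub_cancel_left]
    rcases eq_or_ne (proj σ x) 0 with h0 | h0
    · rwa [h0, map_zero, (vv_eq_zero_iff v 0).mpr rfl, vv_pos_iff]
    · exact (vv_liftProjEquiv_symm_sub_lt hσ hU hU' h0).trans_le (vv_proj_le v σ x)
  have hres := resM_eq_one_of_sub_one_lt v hlt
  refine ⟨M, memGLO_of_resM_eq_one v (entriesInO_of_sub_one_lt v hlt) hres, hres, fun u => ?_⟩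
  rw [hM, ← liftProjEquiv_apply hσ hU]
  change (u : Fin n → K) + ((e'.symm (e u) : Fin n → K) - (e.symm (e u) : Fin n → K)) = _
  rw [e.symm_apply_apply, add_sub_cancel]
  rfl

end Lift

theorem unique_projection_compatible_map_between_lifts_general
    (v : Valuation K Γ) {n d : ℕ}
    (Ubar : Submodule (Kbar v) (Fin n → Kbar v))
    (σ : Fin d → Fin n) (hσ : IsExhibition v σ Ubar)
    (U U' : Submodule K (Fin n → K))
    (hU : resSet v (U : Set (Fin n → K)) = (Ubar : Set (Fin n → Kbar v)))
    (hU' : resSet v (U' : Set (Fin n → K)) = (Ubar : Set (Fin n → Kbar v))) :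
    (∃! M₀ : U →ₗ[K] U',
      ∀ u : U, proj σ ((M₀ u : Fin n → K)) = proj σ (u : Fin n → K)) ∧
    ∀ M₀ : U →ₗ[K] U',
      (∀ u : U, proj σ ((M₀ u : Fin n → K)) = proj σ (u : Fin n → K)) →
      (Function.Bijective M₀ ∧
       (∀ u u' : U, rvEq v ((M₀ u : Fin n → K) - (M₀ u' : Fin n → K))
          ((u : Fin n → K) - (u' : Fin n → K))) ∧
       ∃ M : Matrix (Fin n) (Fin n) K, MemGLO v M ∧ resM v M = 1 ∧
         U.map M.mulVecLin = U' ∧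
         ∀ u : U, M.mulVec (u : Fin n → K) = (M₀ u : Fin n → K)) := by
  have hcompat := forall_proj_eq_iff_eq_liftTransport hσ hU hU'
  refine ⟨⟨liftTransport σ hσ hU hU', (hcompat _).mpr rfl, fun M₀ hM₀ => (hcompat M₀).mp hM₀⟩,
    fun M₀ hM₀ => ?_⟩
  obtain rfl := (hcompat M₀).mp hM₀
  obtain ⟨M, hMGL, hMres, hMu⟩ := exists_matrix_mulVec_eq_liftTransport hσ hU hU'
  refine ⟨(liftTransport σ hσ hU hU').bijective, fun u u' => ?_, M, hMGL, hMres,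
    map_mulVecLin_eq_of_mulVec_eq _ hMu, hMu⟩
  rw [← Submodule.coe_sub, ← map_sub, ← Submodule.coe_sub]
  exact rvEq_of_proj_eq hσ hU' hU (Submodule.coe_mem _) (Submodule.coe_mem _) (hM₀ (u - u'))

/-- given an exhibition `π` of `Ū` and two lifts `U, U'` of `Ū`,
there is a unique `K`-linear `M₀ : U → U'` with `π ∘ M₀ = π`; it is bijective,
a risometry, and extends to some `M ∈ GLₙ(𝒪)` with `res M = Iₙ` sending `U` onto `U'`. -/
theorem unique_projection_compatible_map_between_lifts
    (v : Valuation K Γ) {n d : ℕ}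
    (Ubar : Submodule (Kbar v) (Fin n → Kbar v))
    (hdim : Module.finrank (Kbar v) Ubar = d)
    (σ : Fin d → Fin n) (hσ : IsExhibition v σ Ubar)
    (U U' : Submodule K (Fin n → K))
    (hU : resSet v (U : Set (Fin n → K)) = (Ubar : Set (Fin n → Kbar v)))
    (hU' : resSet v (U' : Set (Fin n → K)) = (Ubar : Set (Fin n → Kbar v))) :
    (∃! M₀ : U →ₗ[K] U',
      ∀ u : U, proj σ ((M₀ u : Fin n → K)) = proj σ (u : Fin n → K)) ∧
    ∀ M₀ : U →ₗ[K] U',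
      (∀ u : U, proj σ ((M₀ u : Fin n → K)) = proj σ (u : Fin n → K)) →
      (Function.Bijective M₀ ∧
       (∀ u u' : U, rvEq v ((M₀ u : Fin n → K) - (M₀ u' : Fin n → K))
          ((u : Fin n → K) - (u' : Fin n → K))) ∧
       ∃ M : Matrix (Fin n) (Fin n) K, MemGLO v M ∧ resM v M = 1 ∧
         U.map M.mulVecLin = U' ∧
         ∀ u : U, M.mulVec (u : Fin n → K) = (M₀ u : Fin n → K)) :=
  unique_projection_compatible_map_between_lifts_general v Ubar σ hσ U U' hU hU'

end
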